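/- arXiv:math/0603385 — 3 statements merged into one kernel-verified Lean document; each statement's English description precedes it below -/
import Mathlib

section
/- For real numbers t, u > 0 let S(t,u) = {z ∈ ℍ : Im z > t, |Re z| < u} be the corresponding Siegel set. Then: (i) if t < √3/2 and u > 1/2, the SL(2,ℤ)-translates of S(t,u) cover ℍ, i.e. for every z ∈ ℍ there is γ ∈ SL(2,ℤ) with γ·z ∈ S(t,u); and (ii) for all t, u > 0 the set {γ ∈ SL(2,ℤ) : γ·S(t,u) ∩ S(t,u) ≠ ∅} is finite. -/
open scoped UpperHalfPlane MatrixGroups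

/-- The Siegel set `S(t,u) = {z ∈ ℍ : Im z > t, |Re z| < u}`. -/
def SiegelSet (t u : ℝ) : Set ℍ :=
  {z | t < (z : ℂ).im ∧ |(z : ℂ).re| < u}

lemma aux_sq_lt_one {m : ℝ} (h0 : 0 ≤ m) (h : m ^ 2 < 1) : m < 1 := by
  nlinarith [sq_nonneg (m - 1)]

lemma siegel_real {t u x y c d yw : ℝ} (ht : 0 < t) (hu : 0 < u) (hy : 0 < y)
    (hz1 : t < y) (hz2 : |x| < u) (hw1 : t < yw)
    (him : yw = y / ((c * x + d) ^ 2 + c ^ 2 * y ^ 2)) (hc1 : 1 ≤ |c|) :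
    |c| < 1 / t ∧ |d| < (1 + u) / t := by
  have hc2 : 1 ≤ c ^ 2 := by nlinarith [_root_.sq_abs c, abs_nonneg c]
  have hNpos : 0 < (c * x + d) ^ 2 + c ^ 2 * y ^ 2 := by nlinarith [sq_nonneg (c * x + d)]
  have h1 : ((c * x + d) ^ 2 + c ^ 2 * y ^ 2) * t < y := by
    rw [him] at hw1
    calc ((c * x + d) ^ 2 + c ^ 2 * y ^ 2) * t
        < ((c * x + d) ^ 2 + c ^ 2 * y ^ 2) * (y / ((c * x + d) ^ 2 + c ^ 2 * y ^ 2)) :=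
          mul_lt_mul_of_pos_left hw1 hNpos
      _ = y := by field_simp
  have hcy : c ^ 2 * y * t < 1 := by nlinarith [sq_nonneg (c * x + d)]
  have hctt : c ^ 2 * t ^ 2 < 1 := by
    nlinarith [mul_nonneg (mul_nonneg (sq_nonneg c) ht.le) (sub_nonneg.mpr hz1.le)]
  have hct : |c| * t < 1 := by
    refine aux_sq_lt_one (mul_nonneg (abs_nonneg c) ht.le) ?_
    rw [mul_pow, _root_.sq_abs]; exact hctt
  have hcbound : |c| < 1 / t := by rw [lt_div_iff₀ ht]; exact hct
  refine ⟨hcbound, ?_⟩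
  have hs2 : (c * x + d) ^ 2 * t ^ 2 * c ^ 2 < 1 := by
    nlinarith [mul_lt_mul_of_pos_right h1 (mul_pos ht (by nlinarith : (0:ℝ) < c ^ 2)),
      sq_nonneg (c * y), sq_nonneg (c * x + d)]
  have hst : |c * x + d| * t < 1 := by
    have h3 : (|c * x + d| * t * |c|) ^ 2 < 1 := by
      rw [mul_pow, mul_pow, _root_.sq_abs, _root_.sq_abs]; nlinarith [hs2]
    have h4 : |c * x + d| * t * |c| < 1 :=
      aux_sq_lt_one (mul_nonneg (mul_nonneg (abs_nonneg (c * x + d)) ht.le) (abs_nonneg c)) h3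
    nlinarith [mul_le_mul_of_nonneg_left hc1 (mul_nonneg (abs_nonneg (c * x + d)) ht.le)]
  have hd1 : |d| ≤ |c * x + d| + |c| * |x| := by
    calc |d| = |(c * x + d) - c * x| := by ring_nf
      _ ≤ |c * x + d| + |c * x| := abs_sub _ _
      _ = |c * x + d| + |c| * |x| := by rw [abs_mul]
  rw [lt_div_iff₀ ht]
  have hcx : |c| * |x| * t ≤ |c| * t * u := by
    have := mul_le_mul_of_nonneg_left hz2.le (mul_nonneg (abs_nonneg c) ht.le)
    nlinarith [abs_nonneg x]
  nlinarith [mul_le_mul_of_nonneg_right hd1 ht.le, mul_lt_mul_of_pos_right hct hu]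

open Complex UpperHalfPlane in
lemma siegel_key {t u : ℝ} (ht : 0 < t) (hu : 0 < u) (γ : SL(2, ℤ)) (z : ℍ)
    (hz : z ∈ SiegelSet t u) (hw : γ • z ∈ SiegelSet t u) (hc : γ 1 0 ≠ 0) :
    |((γ 1 0 : ℤ) : ℝ)| < 1 / t ∧ |((γ 1 1 : ℤ) : ℝ)| < (1 + u) / t := by
  obtain ⟨hz1, hz2⟩ := hz
  obtain ⟨hw1, hw2⟩ := hw
  rw [UpperHalfPlane.coe_im] at hz1 hw1
  rw [UpperHalfPlane.coe_re] at hz2 hw2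
  have hN : Complex.normSq (UpperHalfPlane.denom γ z) =
      (((γ 1 0 : ℤ) : ℝ) * z.re + ((γ 1 1 : ℤ) : ℝ)) ^ 2 +
        ((γ 1 0 : ℤ) : ℝ) ^ 2 * z.im ^ 2 := by
    rw [ModularGroup.denom_apply, Complex.normSq_apply]
    simp [Complex.add_re, Complex.add_im, Complex.mul_re, Complex.mul_im]
    ring
  have him := ModularGroup.im_smul_eq_div_normSq γ z
  rw [hN] at him
  have hc1 : (1 : ℝ) ≤ |((γ 1 0 : ℤ) : ℝ)| := by
    have : (1 : ℤ) ≤ |γ 1 0| := Int.one_le_abs hc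
    rw [← Int.cast_abs]; exact_mod_cast this
  exact siegel_real ht hu z.2 hz1 hz2 hw1 him hc1

lemma inv_entry_c (γ : SL(2, ℤ)) : (γ⁻¹) 1 0 = -(γ 1 0) := by
  rw [Matrix.SpecialLinearGroup.SL2_inv_expl]; rfl

lemma inv_entry_d (γ : SL(2, ℤ)) : (γ⁻¹) 1 1 = γ 0 0 := by
  rw [Matrix.SpecialLinearGroup.SL2_inv_expl]; rfl

open Matrix Matrix.SpecialLinearGroup ModularGroup UpperHalfPlane in
lemma siegel_c_zero {t u : ℝ} (γ : SL(2, ℤ)) (z : ℍ)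
    (hz : z ∈ SiegelSet t u) (hw : γ • z ∈ SiegelSet t u) (hc : γ 1 0 = 0) :
    |((γ 0 1 : ℤ) : ℝ)| < 2 * u ∧ |γ 0 0| = 1 ∧ |γ 1 1| = 1 := by
  obtain ⟨hz1, hz2⟩ := hz
  obtain ⟨hw1, hw2⟩ := hw
  rw [UpperHalfPlane.coe_re] at hz2 hw2
  have had := γ.det_coe
  rw [Matrix.det_fin_two, hc] at had
  replace had : γ 0 0 * γ 1 1 = 1 := by linarith
  have key : ∀ n : ℤ, γ • z = T ^ n • z → |((γ 0 1 : ℤ) : ℝ)| = |(n : ℝ)| →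
      |((γ 0 1 : ℤ) : ℝ)| < 2 * u := by
    intro n hn habs
    have hre : (γ • z).re = z.re + n := by rw [hn]; exact re_T_zpow_smul z n
    rw [habs]
    have : |(n : ℝ)| ≤ |z.re + (n : ℝ)| + |z.re| := by
      calc |(n : ℝ)| = |(z.re + n) - z.re| := by ring_nf
        _ ≤ |z.re + (n : ℝ)| + |z.re| := abs_sub _ _
    rw [hre] at hw2
    push_cast at hw2 this ⊢
    linarith
  rcases Int.eq_one_or_neg_one_of_mul_eq_one' had with ⟨ha, hd⟩ | ⟨ha, hd⟩
  · refine ⟨?_, by rw [ha]; rfl, by rw [hd]; rfl⟩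
    have hγ : γ = T ^ (γ 0 1) := by
      ext i j; fin_cases i <;> fin_cases j <;>
        simp [ha, hc, hd, coe_T_zpow, show (1 : Fin (0 + 2)) = (1 : Fin 2) from rfl]
    exact key (γ 0 1) (by conv_lhs => rw [hγ]) rfl
  · refine ⟨?_, by rw [ha]; rfl, by rw [hd]; rfl⟩
    have hγ : γ = -T ^ (-(γ 0 1)) := by
      ext i j; fin_cases i <;> fin_cases j <;>
        simp [ha, hc, hd, coe_T_zpow, show (1 : Fin (0 + 2)) = (1 : Fin 2) from rfl]
    refine key (-(γ 0 1)) (by conv_lhs => rw [hγ, SL_neg_smul]) ?_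
    push_cast
    rw [abs_neg]

lemma abs_cast_lt_mem {B : ℝ} {m : ℤ} (h : |(m : ℝ)| < B) : m ∈ Finset.Icc (-⌈B⌉) ⌈B⌉ := by
  rw [Finset.mem_Icc, ← abs_le]
  have h2 : ((|m| : ℤ) : ℝ) ≤ ((⌈B⌉ : ℤ) : ℝ) := by
    rw [Int.cast_abs]; exact h.le.trans (Int.le_ceil B)
  exact_mod_cast h2

lemma box_finite (N : ℤ) :
    {γ : SL(2, ℤ) | ∀ i j, (γ : Matrix (Fin 2) (Fin 2) ℤ) i j ∈ Finset.Icc (-N) N}.Finite := by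
  have h2 : {A : Matrix (Fin 2) (Fin 2) ℤ | ∀ i j, A i j ∈ Finset.Icc (-N) N}.Finite := by
    apply (Set.Finite.pi fun _ : Fin 2 => Set.Finite.pi fun _ : Fin 2 =>
      Set.finite_Icc (-N) N).subset
    intro A hA
    simp only [Set.mem_pi, Set.mem_univ, forall_true_left]
    intro i j
    simpa using hA i j
  apply Set.Finite.of_finite_image (f := fun γ : SL(2, ℤ) => (γ : Matrix (Fin 2) (Fin 2) ℤ))
  · apply h2.subset
    rintro A ⟨γ, hγ, rfl⟩
    exact hγ
  · intro γ1 _ γ2 _ h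
    exact Subtype.coe_injective h

/-- (i) If `t < √3/2` and `u > 1/2`, the `SL(2,ℤ)`-translates of the Siegel set `S(t,u)`
cover `ℍ`; (ii) for all `t, u > 0`, the set `{γ ∈ SL(2,ℤ) : γ·S(t,u) ∩ S(t,u) ≠ ∅}` is
finite. -/
theorem stmt_3 (t u : ℝ) (ht : 0 < t) (hu : 0 < u) :
    ((t < Real.sqrt 3 / 2 → 1 / 2 < u →
        ∀ z : ℍ, ∃ γ : SL(2, ℤ), γ • z ∈ SiegelSet t u) ∧
      {γ : SL(2, ℤ) | (((γ • ·) '' SiegelSet t u) ∩ SiegelSet t u).Nonempty}.Finite) := by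
  constructor
  · intro ht3 hu2 z
    obtain ⟨g, hg⟩ := ModularGroup.exists_smul_mem_fd z
    refine ⟨g, ?_, ?_⟩
    · rw [UpperHalfPlane.coe_im]
      have h3 := ModularGroup.three_le_four_mul_im_sq_of_mem_fd hg
      have him : 0 < (g • z).im := (g • z).2
      have hs : Real.sqrt 3 / 2 ≤ (g • z).im := by
        rw [div_le_iff₀ (by norm_num : (0:ℝ) < 2)]
        rw [show (g • z).im * 2 = Real.sqrt (((g • z).im * 2) ^ 2) from
          (Real.sqrt_sq (by positivity)).symm]
        apply Real.sqrt_le_sqrt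
        nlinarith
      linarith
    · rw [UpperHalfPlane.coe_re]
      linarith [hg.2]
  · have hBpos : (0:ℝ) < (1 + u) / t := by positivity
    obtain ⟨B, hBdef⟩ : ∃ B : ℝ, B = ((1 + u) / t) ^ 2 + (1 + u) / t + 2 * u + 2 := ⟨_, rfl⟩
    have hsq : (0:ℝ) ≤ ((1 + u) / t) ^ 2 := sq_nonneg _
    have h2uB : 2 * u < B := by linarith
    have h1B : (1:ℝ) < B := by linarith
    have hdB : (1 + u) / t < B := by linarith
    have hcB : 1 / t < B := by
      have h9 : 1 / t ≤ (1 + u) / t := by gcongr <;> linarith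
      linarith
    have hbB : ((1 + u) / t) ^ 2 + 1 ≤ B := by linarith
    apply (box_finite ⌈B⌉).subset
    rintro γ ⟨w, ⟨z, hz, rfl⟩, hw⟩
    simp only at hw
    have haR : |((γ 0 0 : ℤ) : ℝ)| < B ∧ |((γ 0 1 : ℤ) : ℝ)| < B ∧
        |((γ 1 0 : ℤ) : ℝ)| < B ∧ |((γ 1 1 : ℤ) : ℝ)| < B := by
      by_cases hc0 : γ 1 0 = 0
      · obtain ⟨hb, ha, hd⟩ := siegel_c_zero γ z hz hw hc0
        have haR : |((γ 0 0 : ℤ) : ℝ)| = 1 := by rw [← Int.cast_abs, ha]; norm_num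
        have hdR : |((γ 1 1 : ℤ) : ℝ)| = 1 := by rw [← Int.cast_abs, hd]; norm_num
        have hcR : |((γ 1 0 : ℤ) : ℝ)| = 0 := by rw [← Int.cast_abs, hc0]; norm_num
        exact ⟨by rw [haR]; exact h1B, by linarith, by rw [hcR]; linarith, by rw [hdR]; exact h1B⟩
      · have hk1 := siegel_key ht hu γ z hz hw hc0
        have hzz : (γ⁻¹ : SL(2, ℤ)) • (γ • z) ∈ SiegelSet t u := by
          rw [inv_smul_smul]; exact hz
        have hcinv : (γ⁻¹ : SL(2, ℤ)) 1 0 ≠ 0 := by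
          rw [inv_entry_c]; exact neg_ne_zero.mpr hc0
        have hk2 := siegel_key ht hu γ⁻¹ (γ • z) hw hzz hcinv
        have haR : |((γ 0 0 : ℤ) : ℝ)| < (1 + u) / t := by
          rw [← inv_entry_d γ]; exact hk2.2
        have hdetZ : γ 0 0 * γ 1 1 - γ 0 1 * γ 1 0 = 1 := by
          have h := γ.det_coe; rwa [Matrix.det_fin_two] at h
        have hdetR : ((γ 0 0 : ℤ) : ℝ) * ((γ 1 1 : ℤ) : ℝ) -
            ((γ 0 1 : ℤ) : ℝ) * ((γ 1 0 : ℤ) : ℝ) = 1 := by exact_mod_cast hdetZ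
        have hc1R : (1:ℝ) ≤ |((γ 1 0 : ℤ) : ℝ)| := by
          rw [← Int.cast_abs]; exact_mod_cast Int.one_le_abs hc0
        have hbR : |((γ 0 1 : ℤ) : ℝ)| < ((1 + u) / t) ^ 2 + 1 := by
          have h5 : |((γ 0 1 : ℤ) : ℝ)| ≤ |((γ 0 1 : ℤ) : ℝ) * ((γ 1 0 : ℤ) : ℝ)| := by
            rw [abs_mul]
            nlinarith [abs_nonneg ((γ 0 1 : ℤ) : ℝ)]
          have h6 : ((γ 0 1 : ℤ) : ℝ) * ((γ 1 0 : ℤ) : ℝ) =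
              ((γ 0 0 : ℤ) : ℝ) * ((γ 1 1 : ℤ) : ℝ) - 1 := by linarith
          rw [h6] at h5
          have h7 : |((γ 0 0 : ℤ) : ℝ) * ((γ 1 1 : ℤ) : ℝ) - 1| ≤
              |((γ 0 0 : ℤ) : ℝ)| * |((γ 1 1 : ℤ) : ℝ)| + 1 := by
            calc |((γ 0 0 : ℤ) : ℝ) * ((γ 1 1 : ℤ) : ℝ) - 1|
                ≤ |((γ 0 0 : ℤ) : ℝ) * ((γ 1 1 : ℤ) : ℝ)| + |(1:ℝ)| := abs_sub _ _
              _ = |((γ 0 0 : ℤ) : ℝ)| * |((γ 1 1 : ℤ) : ℝ)| + 1 := by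
                  rw [abs_mul, abs_one]
          have h8 : |((γ 0 0 : ℤ) : ℝ)| * |((γ 1 1 : ℤ) : ℝ)| < ((1 + u) / t) ^ 2 := by
            have := mul_lt_mul'' haR hk1.2 (abs_nonneg _) (abs_nonneg _)
            rw [sq]; exact this
          linarith
        exact ⟨by linarith, by linarith, by linarith, by linarith⟩
    obtain ⟨ha, hb, hc, hd⟩ := haR
    intro i j
    fin_cases i <;> fin_cases j
    · exact abs_cast_lt_mem ha
    · exact abs_cast_lt_mem hb
    · exact abs_cast_lt_mem hc
    · exact abs_cast_lt_mem hd
end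

section
/- Every positive definite binary quadratic form with real coefficients can be reduced by a unimodular change of variables: for every positive definite Q(x,y) = Ax² + Bxy + Cy² there exists γ = [[a,b],[c,d]] ∈ SL(2,ℤ) such that, writing Q(ax+cy, bx+dy) = A'x² + B'xy + C'y², the coefficients satisfy |B'| ≤ A' ≤ C'. -/
/-! A positive definite form factors as `A |x + y z|²` with `z` in the upper half plane. The
substitution by a matrix of `SL(2, ℤ)` multiplies `A` by `|c z + d|²` and replaces `z` by a Möbius
image `w = g • z`, giving `A' (x² + 2 Re w · x y + |w|² y²)`. So the reduction conditions
`|B'| ≤ A' ≤ C'` say exactly that `w` lies in the standard fundamental domain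
`|Re w| ≤ 1/2, |w| ≥ 1`, which meets every orbit. -/

open scoped MatrixGroups Modular
open Complex UpperHalfPlane

lemma pos_and_discr_pos_of_posDef {A B C : ℝ}
    (hpd : ∀ x y : ℝ, (x, y) ≠ (0, 0) → 0 < A * x ^ 2 + B * x * y + C * y ^ 2) :
    0 < A ∧ 0 < 4 * A * C - B ^ 2 := by
  have hA : 0 < A := by simpa using hpd 1 0 (by simp)
  have hQ := hpd (-B) (2 * A) (by simp [hA.ne'])
  refine ⟨hA, pos_of_mul_pos_right (a := A) ?_ hA.le⟩
  linear_combination hQ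

lemma normSq_ofReal_add_ofReal_mul (z : ℂ) (x y : ℝ) :
    normSq (x + y * z) = x ^ 2 + 2 * z.re * x * y + normSq z * y ^ 2 := by
  simp only [normSq_apply, add_re, ofReal_re, mul_re, ofReal_im, zero_mul, sub_zero, add_im,
    mul_im, zero_add]
  ring

/-- `z = (B + i √(4AC - B²)) / 2A` is the root of `A z² - B z + C` in `ℍ`. -/
lemma exists_upperHalfPlane_eq_mul_normSq {A B C : ℝ} (hA : 0 < A)
    (hdisc : 0 < 4 * A * C - B ^ 2) :
    ∃ z : ℍ, ∀ x y : ℝ, A * x ^ 2 + B * x * y + C * y ^ 2 = A * normSq (x + y * (z : ℂ)) := by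
  obtain ⟨s, hs, hs2⟩ : ∃ s : ℝ, 0 < s ∧ s ^ 2 = 4 * A * C - B ^ 2 :=
    ⟨_, Real.sqrt_pos.2 hdisc, Real.sq_sqrt hdisc.le⟩
  refine ⟨⟨⟨B / (2 * A), s / (2 * A)⟩, by positivity⟩, fun x y => ?_⟩
  rw [normSq_ofReal_add_ofReal_mul]
  simp only [normSq_apply]
  field_simp
  linear_combination (-y ^ 2) * hs2

/-- Substituting `antiTranspose g` into `A |x + y z|²` moves `z` to `g • z`
(`ofReal_add_ofReal_mul_eq_denom_mul`). -/
def antiTranspose {R : Type*} [CommRing R] (g : SL(2, R)) : SL(2, R) :=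
  ⟨!![g 1 1, g 1 0; g 0 1, g 0 0], by
    have hdet := g.det_coe
    rw [Matrix.det_fin_two] at hdet
    rw [Matrix.det_fin_two_of]
    linear_combination hdet⟩

lemma ofReal_add_ofReal_mul_eq_denom_mul (g : SL(2, ℤ)) (z : ℍ) (x y : ℝ) :
    ((g 1 1 * x + g 0 1 * y : ℝ) : ℂ) + ((g 1 0 * x + g 0 0 * y : ℝ) : ℂ) * z
      = denom g z * (x + y * ((g • z : ℍ) : ℂ)) := by
  have hdenom := denom_ne_zero g z
  rw [ModularGroup.denom_apply] at hdenom ⊢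
  rw [coe_specialLinearGroup_apply]
  simp only [algebraMap_int_eq, eq_intCast, ofReal_intCast]
  rw [mul_add, mul_left_comm, mul_div_cancel₀ _ hdenom]
  push_cast
  ring

lemma reduced_of_mem_fd {a : ℝ} (ha : 0 ≤ a) {w : ℍ} (hw : w ∈ 𝒟) :
    |2 * a * (w : ℂ).re| ≤ a ∧ a ≤ a * normSq w := by
  obtain ⟨hnorm, hre⟩ := hw
  refine ⟨?_, le_mul_of_one_le_right ha hnorm⟩
  calc |2 * a * (w : ℂ).re| = 2 * a * |w.re| := by
        rw [coe_re, abs_mul, abs_of_nonneg (by positivity)]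
    _ ≤ 2 * a * (1 / 2) := by gcongr
    _ = a := by ring

/-- Every positive definite binary quadratic form can be reduced by a unimodular change
of variables: there is `γ = [[a,b],[c,d]] ∈ SL(2,ℤ)` so that writing
`Q(ax+cy, bx+dy) = A'x² + B'xy + C'y²` one has `|B'| ≤ A' ≤ C'`. -/
theorem stmt_6 (A B C : ℝ)
    (hpd : ∀ x y : ℝ, (x, y) ≠ (0, 0) → 0 < A * x ^ 2 + B * x * y + C * y ^ 2) :
    ∃ γ : SL(2, ℤ), ∃ A' B' C' : ℝ,
      (∀ x y : ℝ,
        A * (((γ : Matrix (Fin 2) (Fin 2) ℤ) 0 0 : ℝ) * x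
              + ((γ : Matrix (Fin 2) (Fin 2) ℤ) 1 0 : ℝ) * y) ^ 2
          + B * (((γ : Matrix (Fin 2) (Fin 2) ℤ) 0 0 : ℝ) * x
              + ((γ : Matrix (Fin 2) (Fin 2) ℤ) 1 0 : ℝ) * y)
              * (((γ : Matrix (Fin 2) (Fin 2) ℤ) 0 1 : ℝ) * x
              + ((γ : Matrix (Fin 2) (Fin 2) ℤ) 1 1 : ℝ) * y)
          + C * (((γ : Matrix (Fin 2) (Fin 2) ℤ) 0 1 : ℝ) * x
              + ((γ : Matrix (Fin 2) (Fin 2) ℤ) 1 1 : ℝ) * y) ^ 2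
        = A' * x ^ 2 + B' * x * y + C' * y ^ 2) ∧
      |B'| ≤ A' ∧ A' ≤ C' := by
  obtain ⟨hA, hdisc⟩ := pos_and_discr_pos_of_posDef hpd
  obtain ⟨z, hQ⟩ := exists_upperHalfPlane_eq_mul_normSq hA hdisc
  obtain ⟨g, hg⟩ := ModularGroup.exists_smul_mem_fd z
  refine ⟨antiTranspose g, A * normSq (denom g z), _, _, fun x y => ?_,
    reduced_of_mem_fd (mul_nonneg hA.le (normSq_nonneg _)) hg⟩
  simp only [antiTranspose, Matrix.of_apply, Matrix.cons_val', Matrix.cons_val_zero,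
    Matrix.cons_val_fin_one, Matrix.cons_val_one]
  rw [hQ, ofReal_add_ofReal_mul_eq_denom_mul, normSq_mul, normSq_ofReal_add_ofReal_mul]
  ring
end

section
/- Let T be the closed ideal triangle in ℍ with vertices 0, 1, ∞, namely T = {z ∈ ℍ : 0 ≤ Re z ≤ 1 and |z − 1/2| ≥ 1/2}. Then the SL(2,ℤ)-translates of T cover ℍ: for every z ∈ ℍ there exists γ ∈ SL(2,ℤ) with γ·z ∈ T. Moreover, letting T° = {z ∈ ℍ : 0 < Re z < 1 and |z − 1/2| > 1/2} denote the interior, the set {γ ∈ SL(2,ℤ) : γ·T° ∩ T° ≠ ∅} is finite. -/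
open scoped UpperHalfPlane MatrixGroups

/-- The closed ideal triangle in `ℍ` with vertices `0`, `1`, `∞`. -/
def idealTriangle : Set ℍ :=
  {z | 0 ≤ (z : ℂ).re ∧ (z : ℂ).re ≤ 1 ∧ 1 / 2 ≤ ‖(z : ℂ) - 1 / 2‖}

/-- The interior of the ideal triangle with vertices `0`, `1`, `∞`. -/
def idealTriangleInt : Set ℍ :=
  {z | 0 < (z : ℂ).re ∧ (z : ℂ).re < 1 ∧ 1 / 2 < ‖(z : ℂ) - 1 / 2‖}

open UpperHalfPlane Complex

section Aux

/-- a band where both `|re|` and `1/im` are bounded -/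
def auxBand : Set ℍ := {u | |u.re| ≤ 1 ∧ 1/2 ≤ u.im}

def mS : SL(2,ℤ) := ⟨!![0,-1;1,0], by norm_num [Matrix.det_fin_two_of]⟩
def mR : SL(2,ℤ) := ⟨!![0,-1;1,-1], by norm_num [Matrix.det_fin_two_of]⟩

lemma aux_smul_coe (g : SL(2,ℤ)) (z : ℍ) :
    ((g • z : ℍ) : ℂ) = ((g 0 0 : ℂ) * z + g 0 1) / ((g 1 0 : ℂ) * z + g 1 1) := by
  rw [UpperHalfPlane.coe_specialLinearGroup_apply]
  simp [UpperHalfPlane.num, UpperHalfPlane.denom]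

lemma aux_im (g : SL(2,ℤ)) (z : ℍ) :
    (g • z).im = z.im / (((g 1 0 : ℝ) * z.re + g 1 1)^2 + (g 1 0 : ℝ)^2 * z.im^2) := by
  rw [ModularGroup.im_smul_eq_div_normSq, ModularGroup.denom_apply]
  congr 1
  rw [Complex.normSq_apply]
  simp [UpperHalfPlane.coe_re, UpperHalfPlane.coe_im]
  ring

lemma aux_cd (g : SL(2,ℤ)) (u : ℍ) (hu : u ∈ auxBand) (hgu : g • u ∈ auxBand) :
    (g 1 0)^2 ≤ 4 ∧ (g 1 0 ≠ 0 → |g 1 1| ≤ 4) := by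
  obtain ⟨hx, hy⟩ := hu
  obtain ⟨hx', hy'⟩ := hgu
  set c : ℝ := (g 1 0 : ℝ) with hc
  set d : ℝ := (g 1 1 : ℝ) with hd
  have him := aux_im g u
  set D : ℝ := (c * u.re + d)^2 + c^2 * u.im^2 with hD
  have hupos := u.im_pos
  have hxr : |u.re| ≤ 1 := hx
  have hDpos : 0 < D := by
    have h2 := (g • u).im_pos
    rw [him] at h2
    rcases (div_pos_iff.mp h2) with h | h
    · exact h.2
    · linarith [h.1, hupos]
  have hDle : D ≤ 2 * u.im := by
    rw [him, le_div_iff₀ hDpos] at hy'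
    linarith
  have he1 : c^2 * u.im^2 ≤ 2 * u.im := by nlinarith [sq_nonneg (c * u.re + d)]
  have hcsq : c^2 ≤ 4 := by
    have he2 : 2 * u.im ≤ 4 * u.im^2 := by nlinarith
    have he3 : c^2 * u.im^2 ≤ 4 * u.im^2 := le_trans he1 he2
    have hpos : (0:ℝ) < u.im^2 := by positivity
    exact le_of_mul_le_mul_right he3 hpos
  have hcsqZ : (g 1 0)^2 ≤ 4 := by rw [hc] at hcsq; exact_mod_cast hcsq
  refine ⟨hcsqZ, fun hc0 => ?_⟩
  have hc1 : (1:ℝ) ≤ c^2 := by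
    have h1 : (1:ℤ) ≤ (g 1 0)^2 := by
      have := Int.one_le_abs hc0
      nlinarith [_root_.sq_abs (g 1 0)]
    rw [hc]; exact_mod_cast h1
  have him2 : u.im ≤ 2 := by nlinarith [sq_nonneg (c * u.re + d)]
  have hsq : (c * u.re + d)^2 ≤ 4 := by nlinarith [sq_nonneg c, sq_nonneg u.im]
  have habs : |c * u.re + d| ≤ 2 := by
    nlinarith [abs_nonneg (c * u.re + d), _root_.sq_abs (c * u.re + d)]
  have hcabs : |c| ≤ 2 := by
    nlinarith [abs_nonneg c, _root_.sq_abs c]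
  have hdabs : |d| ≤ 4 := by
    have h1 : |d| ≤ |c * u.re + d| + |c * u.re| := by
      calc |d| = |(c * u.re + d) + -(c * u.re)| := by ring_nf
        _ ≤ |c * u.re + d| + |-(c * u.re)| := abs_add_le _ _
        _ = |c * u.re + d| + |c * u.re| := by rw [abs_neg]
    have h2 : |c * u.re| ≤ 2 := by
      rw [abs_mul]
      calc |c| * |u.re| ≤ 2 * 1 := mul_le_mul hcabs hxr (abs_nonneg _) (by norm_num)
        _ = 2 := by norm_num
    linarith
  have : |(g 1 1 : ℝ)| ≤ 4 := by rw [← hd]; exact hdabs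
  exact_mod_cast this

lemma aux_bounded {g : SL(2,ℤ)} {u : ℍ} (hu : u ∈ auxBand) (hgu : g • u ∈ auxBand) :
    ∀ i j, |g i j| ≤ 17 := by
  have h1 := aux_cd g u hu hgu
  have hinv : g⁻¹ • (g • u) = u := inv_smul_smul g u
  have h2 := aux_cd g⁻¹ (g • u) hgu (by rw [hinv]; exact hu)
  have hie := Matrix.SpecialLinearGroup.SL2_inv_expl g
  have hia : (g⁻¹) 1 1 = g 0 0 := by rw [hie]; rfl
  have hic : (g⁻¹) 1 0 = -(g 1 0) := by rw [hie]; rfl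
  rw [hia, hic] at h2
  have hdet : g 0 0 * g 1 1 - g 0 1 * g 1 0 = 1 := by
    have := g.2
    rwa [Matrix.det_fin_two] at this
  have hcabs : |g 1 0| ≤ 2 := by nlinarith [abs_nonneg (g 1 0), _root_.sq_abs (g 1 0), h1.1]
  have hfinal : |g 0 0| ≤ 17 ∧ |g 0 1| ≤ 17 ∧ |g 1 0| ≤ 17 ∧ |g 1 1| ≤ 17 := by
    by_cases hc0 : g 1 0 = 0
    · have had : g 0 0 * g 1 1 = 1 := by
        rw [hc0] at hdet; omega
      have hco := aux_smul_coe g u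
      rw [hc0] at hco
      have hbound : |u.re + ((g 0 0 : ℝ) * (g 0 1 : ℝ))| ≤ 1 := by
        have hre : (g • u).re = u.re + ((g 0 0 : ℝ) * (g 0 1 : ℝ)) := by
          rcases Int.mul_eq_one_iff_eq_one_or_neg_one.mp had with ⟨ha1, hd1⟩ | ⟨ha1, hd1⟩ <;>
            rw [← UpperHalfPlane.coe_re, hco, ha1, hd1] <;> push_cast <;>
            norm_num [div_neg, neg_div, Complex.neg_re, Complex.add_re, Complex.sub_re,
              UpperHalfPlane.coe_re, neg_add_rev] <;> try ring
        rw [← hre]; exact hgu.1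
      have hab : |(g 0 0 : ℝ) * (g 0 1 : ℝ)| ≤ 2 := by
        have := hu.1
        have h3 : |(g 0 0 : ℝ) * (g 0 1 : ℝ)| ≤ |u.re + (g 0 0 : ℝ) * (g 0 1 : ℝ)| + |u.re| := by
          calc |(g 0 0 : ℝ) * (g 0 1 : ℝ)| = |(u.re + (g 0 0 : ℝ) * (g 0 1 : ℝ)) + -u.re| := by
                ring_nf
            _ ≤ _ := by rw [← abs_neg u.re] ; exact abs_add_le _ _
        linarith
      have habZ : |g 0 0 * g 0 1| ≤ 2 := by
        have : |((g 0 0 * g 0 1 : ℤ) : ℝ)| ≤ 2 := by push_cast; exact hab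
        exact_mod_cast this
      rcases Int.mul_eq_one_iff_eq_one_or_neg_one.mp had with ⟨ha1, hd1⟩ | ⟨ha1, hd1⟩ <;>
        · rw [ha1] at habZ
          simp [abs_mul] at habZ
          refine ⟨by rw [ha1]; norm_num, by omega, by rw [hc0]; norm_num, by rw [hd1]; norm_num⟩
    · have hd : |g 1 1| ≤ 4 := h1.2 hc0
      have ha : |g 0 0| ≤ 4 := h2.2 (by simpa using hc0)
      have h4 : (1:ℤ) ≤ |g 1 0| := Int.one_le_abs hc0
      have h5 : |g 0 1| * |g 1 0| = |g 0 0 * g 1 1 - 1| := by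
        rw [← abs_mul]; congr 1; omega
      have h6 : |g 0 0 * g 1 1 - 1| ≤ 17 := by
        calc |g 0 0 * g 1 1 - 1| ≤ |g 0 0 * g 1 1| + 1 := by
              rw [sub_eq_add_neg]; exact (abs_add_le _ _).trans (by simp)
          _ = |g 0 0| * |g 1 1| + 1 := by rw [abs_mul]
          _ ≤ 4 * 4 + 1 := by
              have := mul_le_mul ha hd (abs_nonneg _) (by norm_num : (0:ℤ) ≤ 4)
              omega
          _ = 17 := by norm_num
      have hb : |g 0 1| ≤ 17 := by
        have h7 : |g 0 1| ≤ |g 0 1| * |g 1 0| :=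
          le_mul_of_one_le_right (abs_nonneg _) h4
        omega
      exact ⟨by omega, hb, by omega, by omega⟩
  intro i j
  fin_cases i <;> fin_cases j
  · exact hfinal.1
  · exact hfinal.2.1
  · exact hfinal.2.2.1
  · exact hfinal.2.2.2

lemma mS_coe (z : ℍ) : ((mS • z : ℍ) : ℂ) = -1 / (z : ℂ) := by
  rw [aux_smul_coe]
  have h00 : mS 0 0 = 0 := rfl
  have h01 : mS 0 1 = -1 := rfl
  have h10 : mS 1 0 = 1 := rfl
  have h11 : mS 1 1 = 0 := rfl
  rw [h00, h01, h10, h11]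
  push_cast
  ring

lemma mR_coe (z : ℍ) : ((mR • z : ℍ) : ℂ) = -1 / ((z : ℂ) - 1) := by
  rw [aux_smul_coe]
  have h00 : mR 0 0 = 0 := rfl
  have h01 : mR 0 1 = -1 := rfl
  have h10 : mR 1 0 = 1 := rfl
  have h11 : mR 1 1 = -1 := rfl
  rw [h00, h01, h10, h11]
  push_cast
  ring_nf

lemma aux_move (z : ℍ) (hz : z ∈ idealTriangle) :
    ∃ σ : SL(2,ℤ), (σ = 1 ∨ σ = mS ∨ σ = mR) ∧ σ • z ∈ auxBand := by
  obtain ⟨hx0, hx1, habs⟩ := hz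
  rw [UpperHalfPlane.coe_re] at hx0 hx1
  have hy := z.im_pos
  have hq : z.re ≤ z.re^2 + z.im^2 := by
    have h2 : (1/2:ℝ)^2 ≤ ‖(z:ℂ) - 1/2‖^2 := by
      apply pow_le_pow_left₀ (by norm_num) habs
    rw [Complex.sq_norm, Complex.normSq_apply] at h2
    simp only [Complex.sub_re, Complex.sub_im, Complex.div_ofNat_re, Complex.one_re,
      Complex.div_ofNat_im, Complex.one_im, UpperHalfPlane.coe_re, UpperHalfPlane.coe_im] at h2
    nlinarith [h2]
  by_cases hy2 : 1/2 ≤ z.im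
  · exact ⟨1, Or.inl rfl, by rw [one_smul]; exact ⟨abs_le.mpr ⟨by linarith, hx1⟩, hy2⟩⟩
  push_neg at hy2
  by_cases hxh : z.re ≤ 1/2
  · refine ⟨mS, Or.inr (Or.inl rfl), ?_⟩
    have hqpos : (0:ℝ) < z.re^2 + z.im^2 := by positivity
    have hre : (mS • z).re = -z.re / (z.re^2 + z.im^2) := by
      rw [← UpperHalfPlane.coe_re, mS_coe]
      rw [Complex.div_re, Complex.normSq_apply]
      simp [UpperHalfPlane.coe_re, UpperHalfPlane.coe_im]
      ring
    have him : (mS • z).im = z.im / (z.re^2 + z.im^2) := by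
      rw [← UpperHalfPlane.coe_im, mS_coe]
      rw [Complex.div_im, Complex.normSq_apply]
      simp [UpperHalfPlane.coe_re, UpperHalfPlane.coe_im]
      ring
    have hx2y : z.re ≤ 2 * z.im^2 := by nlinarith
    have hqle : z.re^2 + z.im^2 ≤ 2 * z.im := by nlinarith
    constructor
    · rw [hre, abs_le]
      constructor
      · rw [neg_div, neg_le_neg_iff, div_le_one hqpos]; exact hq
      · apply le_trans _ (by norm_num : (0:ℝ) ≤ 1)
        rw [neg_div, neg_nonpos]
        positivity
    · rw [him, le_div_iff₀ hqpos]; linarith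
  · push_neg at hxh
    refine ⟨mR, Or.inr (Or.inr rfl), ?_⟩
    have hqpos : (0:ℝ) < (z.re - 1)^2 + z.im^2 := by positivity
    have hre : (mR • z).re = (1 - z.re) / ((z.re - 1)^2 + z.im^2) := by
      rw [← UpperHalfPlane.coe_re, mR_coe]
      rw [Complex.div_re, Complex.normSq_apply]
      simp [UpperHalfPlane.coe_re, UpperHalfPlane.coe_im, Complex.sub_re, Complex.sub_im]
      ring
    have him : (mR • z).im = z.im / ((z.re - 1)^2 + z.im^2) := by
      rw [← UpperHalfPlane.coe_im, mR_coe]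
      rw [Complex.div_im, Complex.normSq_apply]
      simp [UpperHalfPlane.coe_re, UpperHalfPlane.coe_im, Complex.sub_re, Complex.sub_im]
      ring
    have hq' : 1 - z.re ≤ (z.re - 1)^2 + z.im^2 := by nlinarith
    have hx2y : 1 - z.re ≤ 2 * z.im^2 := by nlinarith
    have hqle : (z.re - 1)^2 + z.im^2 ≤ 2 * z.im := by nlinarith
    constructor
    · rw [hre, abs_le]
      constructor
      · apply le_trans (by norm_num : (-1:ℝ) ≤ 0)
        exact div_nonneg (by linarith) (le_of_lt hqpos)
      · rw [div_le_one hqpos]; exact hq'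
    · rw [him, le_div_iff₀ hqpos]; linarith

lemma aux_half_le_abs {w : ℂ} (h : 1/4 ≤ Complex.normSq w) : 1/2 ≤ ‖w‖ := by
  rw [Complex.norm_def]
  calc (1/2:ℝ) = Real.sqrt (1/4) := by
        rw [show (1/4:ℝ) = (1/2)^2 by norm_num, Real.sqrt_sq (by norm_num)]
    _ ≤ _ := Real.sqrt_le_sqrt h

end Aux

/-- The `SL(2,ℤ)`-translates of the closed ideal triangle `T` with vertices `0,1,∞`
cover `ℍ`, and the set of `γ ∈ SL(2,ℤ)` with `γ·T° ∩ T° ≠ ∅` is finite. -/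
theorem stmt_19 :
    (∀ z : ℍ, ∃ γ : SL(2, ℤ), γ • z ∈ idealTriangle) ∧
    {γ : SL(2, ℤ) | (((γ • ·) '' idealTriangleInt) ∩ idealTriangleInt).Nonempty}.Finite := by
  constructor
  · -- covering
    intro z
    obtain ⟨g, hg⟩ := ModularGroup.exists_smul_mem_fd z
    obtain ⟨hg1, hg2⟩ := hg
    rw [abs_le] at hg2
    by_cases hre : 0 ≤ (g • z).re
    · refine ⟨g, ?_, ?_, ?_⟩
      · rwa [UpperHalfPlane.coe_re]
      · rw [UpperHalfPlane.coe_re]; linarith [hg2.2]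
      · apply aux_half_le_abs
        rw [Complex.normSq_apply]
        simp only [Complex.sub_re, Complex.sub_im, Complex.div_ofNat_re, Complex.one_re,
          Complex.div_ofNat_im, Complex.one_im, UpperHalfPlane.coe_re, UpperHalfPlane.coe_im]
        have h1 : 1 ≤ (g • z).re * (g • z).re + (g • z).im * (g • z).im := by
          rw [Complex.normSq_apply] at hg1
          simpa [UpperHalfPlane.coe_re, UpperHalfPlane.coe_im] using hg1
        nlinarith [hg2.2]
    · push_neg at hre
      refine ⟨ModularGroup.T * g, ?_⟩
      have hTg : (ModularGroup.T * g) • z = ModularGroup.T • (g • z) := mul_smul _ _ _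
      have hco : (((ModularGroup.T * g) • z : ℍ) : ℂ) = 1 + ((g • z : ℍ) : ℂ) := by
        rw [hTg, UpperHalfPlane.modular_T_smul, UpperHalfPlane.coe_vadd]
        norm_num
      refine ⟨?_, ?_, ?_⟩
      · rw [hco]
        simp only [Complex.add_re, Complex.one_re, UpperHalfPlane.coe_re]
        linarith [hg2.1]
      · rw [hco]
        simp only [Complex.add_re, Complex.one_re, UpperHalfPlane.coe_re]
        linarith
      · apply aux_half_le_abs
        rw [hco, Complex.normSq_apply]
        simp only [Complex.add_re, Complex.add_im, Complex.sub_re, Complex.sub_im,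
          Complex.div_ofNat_re, Complex.one_re, Complex.div_ofNat_im, Complex.one_im,
          UpperHalfPlane.coe_re, UpperHalfPlane.coe_im]
        have h1 : 1 ≤ (g • z).re * (g • z).re + (g • z).im * (g • z).im := by
          rw [Complex.normSq_apply] at hg1
          simpa [UpperHalfPlane.coe_re, UpperHalfPlane.coe_im] using hg1
        nlinarith [hg2.1]
  · -- finiteness
    set Bd : Set SL(2,ℤ) := {g | ∀ i j, |g i j| ≤ 17} with hBdDef
    have hBd : Bd.Finite := by
      have hsub : Bd ⊆ (fun g : SL(2,ℤ) => (g : Matrix (Fin 2) (Fin 2) ℤ)) ⁻¹'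
          (Set.univ.pi fun _ : Fin 2 => Set.univ.pi fun _ : Fin 2 => Set.Icc (-17:ℤ) 17) := by
        intro g hg
        show ∀ i ∈ Set.univ, ∀ j ∈ Set.univ, (g : Matrix (Fin 2) (Fin 2) ℤ) i j ∈ Set.Icc (-17:ℤ) 17
        intro i _ j _
        exact abs_le.mp (hg i j)
      have hfin : (Set.univ.pi fun _ : Fin 2 =>
          Set.univ.pi fun _ : Fin 2 => Set.Icc (-17:ℤ) 17).Finite :=
        Set.Finite.pi fun _ => Set.Finite.pi fun _ => Set.finite_Icc _ _
      exact Set.Finite.subset (hfin.preimage ((Set.injOn_of_injective Subtype.coe_injective))) hsub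
    have hSfin : ({1, mS, mR} : Set SL(2,ℤ)).Finite :=
      ((Set.finite_singleton mR).insert mS).insert 1
    have hTsub : idealTriangleInt ⊆ idealTriangle := by
      rintro z ⟨h1, h2, h3⟩
      exact ⟨le_of_lt h1, le_of_lt h2, le_of_lt h3⟩
    apply Set.Finite.subset
      (Set.Finite.biUnion hSfin fun σ _ => Set.Finite.biUnion hSfin fun τ _ =>
        hBd.image (fun g => σ⁻¹ * g * τ))
    rintro γ ⟨w, ⟨z, hzI, hzw⟩, hwI⟩
    obtain ⟨τ, hτmem, hτ⟩ := aux_move z (hTsub hzI)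
    obtain ⟨σ, hσmem, hσ⟩ := aux_move w (hTsub hwI)
    set g : SL(2,ℤ) := σ * γ * τ⁻¹ with hgdef
    have hgact : g • (τ • z) = σ • w := by
      rw [← hzw]
      have h1 : g * τ = σ * γ := by rw [hgdef]; group
      rw [← mul_smul, h1, mul_smul]
    have hgBd : g ∈ Bd := by
      intro i j
      exact aux_bounded hτ (by rw [hgact]; exact hσ) i j
    simp only [Set.mem_iUnion]
    refine ⟨σ, hσmem, τ, hτmem, g, hgBd, ?_⟩
    rw [hgdef]
    group
end
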